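/- (Theorem 5, part i) Let (Ω, 𝓕, P) be a probability space, B > 0, c ≥ 0, d ∈ ℝ, and (Tₘ)_{m≥1} a sequence of random variables on Ω with Tₘ ~ Gamma(shape m, rate B) for each m. Then d·(m/Tₘ)·exp(−m·c/Tₘ) converges in probability to d·B·exp(−c·B) as m → ∞. That is, the maximum likelihood estimator f̂ of the density f(x;θ) = −A′(x)B(θ)exp(−B(θ)A(x)) based on m lower record values is a consistent estimator of f(x;θ). -/

import Mathlib

/-!
By Chebyshev's inequality, `Var Tₘ = m / B²` forces `Tₘ / m → B⁻¹` in probability. The estimator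
is `g (Tₘ / m)` for `g t = d t⁻¹ exp (-c t⁻¹)`, which is continuous at `B⁻¹ ≠ 0`, so it converges
in probability to `g B⁻¹ = d B exp (-c B)`.
-/

open MeasureTheory ProbabilityTheory Filter Set Real

namespace ProbabilityTheory

variable {a r : ℝ}

lemma integrable_gammaMeasure_iff (ha : 0 < a) (hr : 0 < r) {g : ℝ → ℝ} :
    Integrable g (gammaMeasure a r) ↔
      IntegrableOn (fun x ↦ gammaPDFReal a r x * g x) (Ioi 0) := by
  have hzero : ∀ x ∉ Ici (0 : ℝ), gammaPDFReal a r x * g x = 0 := fun x hx ↦ by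
    simp [gammaPDFReal, show ¬0 ≤ x from hx]
  unfold gammaMeasure gammaPDF
  rw [integrable_withDensity_iff_integrable_smul'
    (measurable_gammaPDFReal a r).ennreal_ofReal (ae_of_all _ fun _ ↦ ENNReal.ofReal_lt_top),
    ← integrableOn_Ici_iff_integrableOn_Ioi]
  simp only [ENNReal.toReal_ofReal (gammaPDFReal_nonneg ha hr _), smul_eq_mul]
  exact ⟨Integrable.integrableOn, fun h ↦ h.integrable_of_forall_notMem_eq_zero hzero⟩

lemma integral_gammaMeasure (ha : 0 < a) (hr : 0 < r) (g : ℝ → ℝ) :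
    ∫ x, g x ∂gammaMeasure a r = ∫ x in Ioi 0, gammaPDFReal a r x * g x := by
  unfold gammaMeasure gammaPDF
  rw [integral_withDensity_eq_integral_toReal_smul
    (measurable_gammaPDFReal a r).ennreal_ofReal (ae_of_all _ fun _ ↦ ENNReal.ofReal_lt_top),
    ← integral_Ici_eq_integral_Ioi, setIntegral_eq_integral_of_forall_compl_eq_zero]
  · simp only [ENNReal.toReal_ofReal (gammaPDFReal_nonneg ha hr _), smul_eq_mul]
  · intro x hx
    simp [gammaPDFReal, show ¬0 ≤ x from hx]

lemma gammaPDFReal_mul_pow_eqOn (n : ℕ) :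
    EqOn (fun x ↦ gammaPDFReal a r x * x ^ n)
      (fun x ↦ r ^ a / Gamma a * (x ^ (a + n - 1) * exp (-(r * x)))) (Ioi 0) := by
  intro x (hx : 0 < x)
  simp only [gammaPDFReal, if_pos hx.le]
  rw [show a + n - 1 = (a - 1) + n by ring, rpow_add hx, rpow_natCast]
  ring

lemma integrable_pow_gammaMeasure (ha : 0 < a) (hr : 0 < r) (n : ℕ) :
    Integrable (fun x ↦ x ^ n) (gammaMeasure a r) := by
  rw [integrable_gammaMeasure_iff ha hr]
  have h : IntegrableOn (fun x ↦ x ^ (a + n - 1) * exp (-(r * x))) (Ioi 0) := by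
    simpa using integrableOn_rpow_mul_exp_neg_mul_rpow (p := 1) (s := a + n - 1)
      (by linarith [n.cast_nonneg (α := ℝ)]) one_pos hr
  exact IntegrableOn.congr_fun (h.const_mul _) (gammaPDFReal_mul_pow_eqOn n).symm
    measurableSet_Ioi

lemma integral_pow_gammaMeasure (ha : 0 < a) (hr : 0 < r) (n : ℕ) :
    ∫ x, x ^ n ∂gammaMeasure a r = Gamma (a + n) / (Gamma a * r ^ n) := by
  rw [integral_gammaMeasure ha hr, setIntegral_congr_fun measurableSet_Ioi
    (gammaPDFReal_mul_pow_eqOn n), integral_const_mul,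
    integral_rpow_mul_exp_neg_mul_Ioi (by positivity) hr, one_div, inv_rpow hr.le,
    rpow_add hr, rpow_natCast]
  have := (Gamma_pos_of_pos ha).ne'
  field_simp

lemma memLp_id_gammaMeasure (ha : 0 < a) (hr : 0 < r) :
    MemLp (fun x ↦ x) 2 (gammaMeasure a r) :=
  (memLp_two_iff_integrable_sq aestronglyMeasurable_id).2 (integrable_pow_gammaMeasure ha hr 2)

lemma integral_id_gammaMeasure (ha : 0 < a) (hr : 0 < r) :
    ∫ x, x ∂gammaMeasure a r = a / r := by
  have := (Gamma_pos_of_pos ha).ne'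
  simpa [Gamma_add_one ha.ne', field] using integral_pow_gammaMeasure ha hr 1

lemma variance_id_gammaMeasure (ha : 0 < a) (hr : 0 < r) :
    Var[fun x ↦ x; gammaMeasure a r] = a / r ^ 2 := by
  have := isProbabilityMeasure_gammaMeasure ha hr
  have := (Gamma_pos_of_pos ha).ne'
  have hΓ : Gamma (a + 2) = (a + 1) * a * Gamma a := by
    rw [show a + 2 = a + 1 + 1 by ring, Gamma_add_one (by positivity), Gamma_add_one ha.ne',
      mul_assoc]
  rw [variance_eq_sub (memLp_id_gammaMeasure ha hr), integral_id_gammaMeasure ha hr]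
  simp only [Pi.pow_apply]
  rw [integral_pow_gammaMeasure ha hr 2, Nat.cast_ofNat, hΓ]
  field_simp
  ring

lemma gammaMeasure_ge_le_div_sq (ha : 0 < a) (hr : 0 < r) {c : ℝ} (hc : 0 < c) :
    gammaMeasure a r {x | c ≤ |x - a / r|} ≤ ENNReal.ofReal (a / r ^ 2 / c ^ 2) := by
  have := isProbabilityMeasure_gammaMeasure ha hr
  simpa [integral_id_gammaMeasure ha hr, variance_id_gammaMeasure ha hr] using
    meas_ge_le_variance_div_sq (memLp_id_gammaMeasure ha hr) hc

end ProbabilityTheory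

namespace MeasureTheory

variable {α ι E F : Type*} [MeasurableSpace α] [PseudoMetricSpace E] [PseudoMetricSpace F]

lemma TendstoInMeasure.comp_continuousAt {μ : Measure α} {l : Filter ι} {X : ι → α → E} {x : E}
    {g : E → F} (hX : TendstoInMeasure μ X l fun _ ↦ x) (hg : ContinuousAt g x) :
    TendstoInMeasure μ (fun i ω ↦ g (X i ω)) l fun _ ↦ g x := by
  rw [tendstoInMeasure_iff_dist] at hX ⊢
  intro ε hε
  obtain ⟨δ, hδ, hgδ⟩ := Metric.continuousAt_iff.mp hg ε hε
  refine tendsto_of_tendsto_of_tendsto_of_le_of_le tendsto_const_nhds (hX δ hδ)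
    (fun _ ↦ zero_le) fun i ↦ measure_mono fun ω (hω : ε ≤ _) ↦
      show δ ≤ _ from le_of_not_gt fun h ↦ hω.not_gt (hgδ h)

end MeasureTheory

lemma tendstoInMeasure_div_of_map_eq_gammaMeasure {Ω : Type*} [MeasurableSpace Ω] {P : Measure Ω}
    {B : ℝ} (hB : 0 < B) {T : ℕ → Ω → ℝ}
    (hT : ∀ m : ℕ, 1 ≤ m → P.map (T m) = gammaMeasure m B) :
    TendstoInMeasure P (fun m ω ↦ T m ω / m) atTop fun _ ↦ B⁻¹ := by
  rw [tendstoInMeasure_iff_dist]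
  intro ε hε
  have hbound : ∀ᶠ m : ℕ in atTop,
      P {ω | ε ≤ dist (T m ω / m) B⁻¹} ≤ ENNReal.ofReal (1 / (B ^ 2 * ε ^ 2) / m) := by
    filter_upwards [eventually_ge_atTop 1] with m hm
    have hm0 : (0 : ℝ) < m := by exact_mod_cast hm
    have hS : {ω | ε ≤ dist (T m ω / m) B⁻¹} = T m ⁻¹' {x | ε * m ≤ |x - m / B|} := by
      ext ω
      rw [mem_ofPred_eq, mem_preimage, mem_ofPred_eq, Real.dist_eq,
        show T m ω / m - B⁻¹ = (T m ω - m / B) / m by field_simp, abs_div, abs_of_pos hm0,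
        le_div_iff₀ hm0]
    have hTm : AEMeasurable (T m) P := .of_map_ne_zero <| by
      rw [hT m hm]
      exact (isProbabilityMeasure_gammaMeasure hm0 hB).ne_zero
    rw [hS, ← Measure.map_apply_of_aemeasurable hTm
      (measurableSet_le (by fun_prop) (by fun_prop)), hT m hm]
    refine (gammaMeasure_ge_le_div_sq hm0 hB (by positivity)).trans_eq ?_
    congr 1
    field_simp
  refine tendsto_of_tendsto_of_tendsto_of_le_of_le' tendsto_const_nhds ?_
    (.of_forall fun _ ↦ zero_le) hbound
  simpa only [ENNReal.ofReal_zero] using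
    ENNReal.tendsto_ofReal (tendsto_const_div_atTop_nhds_zero_nat (1 / (B ^ 2 * ε ^ 2)))

theorem pdf_mle_consistent_general {Ω : Type*} [MeasurableSpace Ω]
    (P : Measure Ω) (B c d : ℝ) (hB : 0 < B)
    (T : ℕ → Ω → ℝ)
    (hT : ∀ m : ℕ, 1 ≤ m → Measure.map (T m) P = gammaMeasure (m : ℝ) B) :
    ∀ ε : ℝ, 0 < ε →
      Tendsto (fun m : ℕ =>
          P {ω | ε < |d * ((m : ℝ) / T m ω) * Real.exp (-((m : ℝ) * c / T m ω)) -
            d * B * Real.exp (-(c * B))|})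
        atTop (nhds 0) := by
  intro ε hε
  have hg : ContinuousAt (fun t : ℝ ↦ d * t⁻¹ * exp (-(c * t⁻¹))) B⁻¹ := by
    have := (inv_pos.2 hB).ne'
    fun_prop (disch := assumption)
  have hconv := (tendstoInMeasure_div_of_map_eq_gammaMeasure hB hT).comp_continuousAt hg
  rw [tendstoInMeasure_iff_dist] at hconv
  refine tendsto_of_tendsto_of_tendsto_of_le_of_le tendsto_const_nhds (hconv ε hε)
    (fun _ ↦ zero_le) fun m ↦ measure_mono fun ω (hω : ε < _) ↦ ?_
  have hc : c * (m / T m ω) = m * c / T m ω := by ring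
  simpa only [mem_ofPred_eq, inv_div, inv_inv, Real.dist_eq, hc] using hω.le

/-- Theorem 5, part i: if `Tₘ ~ Gamma(shape m, rate B)` for each `m ≥ 1`, then
`d (m / Tₘ) exp(-m c / Tₘ) → d B exp(-c B)` in probability: the MLE of the density based on
`m` lower record values is consistent (with `c = A(x) ≥ 0` and `d = -A'(x)`). -/
theorem pdf_mle_consistent {Ω : Type*} [MeasurableSpace Ω]
    (P : Measure Ω) [IsProbabilityMeasure P] (B c d : ℝ) (hB : 0 < B) (hc : 0 ≤ c)
    (T : ℕ → Ω → ℝ)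
    (hT : ∀ m : ℕ, 1 ≤ m → Measure.map (T m) P = gammaMeasure (m : ℝ) B) :
    ∀ ε : ℝ, 0 < ε →
      Tendsto (fun m : ℕ =>
          P {ω | ε < |d * ((m : ℝ) / T m ω) * Real.exp (-((m : ℝ) * c / T m ω)) -
            d * B * Real.exp (-(c * B))|})
        atTop (nhds 0) :=
  pdf_mle_consistent_general P B c d hB T hT
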